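/- Given a network G with duplication forest Γ and DMC model M with parameters p_c ∈ (0,1), p ∈ (0,1), for any two duplicate sequences θ₁, θ₂ compatible with Γ, the likelihood ratio satisfies L(θ₁ | G, Γ, M) / L(θ₂ | G, Γ, M) = ((1−p)/2)^{ℓ(θ₁) − ℓ(θ₂)}. In particular, a compatible sequence maximizes the likelihood if and only if it minimizes the loss number ℓ(θ), and the maximizer does not depend on the parameters p_c and p. -/

import Mathlib

open scoped Classical

universe u

variable {V : Type u}

/-- The merge (backward) operator `R_v^u(G)`: contract duplicate `v` into anchor `u`.
Vertex `v` becomes isolated (representing its removal from the vertex set). -/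
def mergeG (G : SimpleGraph V) (u v : V) : SimpleGraph V where
  Adj x y := x ≠ y ∧ x ≠ v ∧ y ≠ v ∧
    (G.Adj x y ∨ (x = u ∧ G.Adj v y) ∨ (y = u ∧ G.Adj v x))
  symm := ⟨by
    rintro x y ⟨h1, h2, h3, h4⟩
    refine ⟨h1.symm, h3, h2, ?_⟩
    rcases h4 with h | ⟨a, b⟩ | ⟨a, b⟩
    · exact Or.inl h.symm
    · exact Or.inr (Or.inr ⟨a, b⟩)
    · exact Or.inr (Or.inl ⟨a, b⟩)⟩
  loopless := ⟨by rintro x ⟨h, _⟩; exact h rfl⟩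

/-- δ(v): 1 if the duplicate `v` is adjacent to its anchor `u`. -/
noncomputable def deltaI (G : SimpleGraph V) (u v : V) : ℕ :=
  if G.Adj u v then 1 else 0

/-- e(v): number of common neighbours of anchor `u` and duplicate `v`. -/
noncomputable def extI [Fintype V] (G : SimpleGraph V) (u v : V) : ℕ :=
  (G.neighborFinset u ∩ G.neighborFinset v).card

/-- ℓ(v): number of vertices (other than `u`, `v`) adjacent to exactly one of `u`, `v`. -/
noncomputable def lossI [Fintype V] (G : SimpleGraph V) (u v : V) : ℕ :=
  (((G.neighborFinset u ∪ G.neighborFinset v) \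
      (G.neighborFinset u ∩ G.neighborFinset v)) \ {u, v}).card

/-- Apply the merge operators backward along a list of (anchor, duplicate) pairs. -/
noncomputable def graphAfter (G : SimpleGraph V) (steps : List (V × V)) : SimpleGraph V :=
  steps.foldl (fun g p => mergeG g p.1 p.2) G

noncomputable def deltaNum : SimpleGraph V → List (V × V) → ℕ
  | _, [] => 0
  | G, s :: rest => deltaI G s.1 s.2 + deltaNum (mergeG G s.1 s.2) rest

noncomputable def extNum [Fintype V] : SimpleGraph V → List (V × V) → ℕ
  | _, [] => 0
  | G, s :: rest => extI G s.1 s.2 + extNum (mergeG G s.1 s.2) rest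

noncomputable def lossNum [Fintype V] : SimpleGraph V → List (V × V) → ℕ
  | _, [] => 0
  | G, s :: rest => lossI G s.1 s.2 + lossNum (mergeG G s.1 s.2) rest

/-- The likelihood of a (backward) history: product of one-step DMC transition
probabilities `p_c^{δ_i} p^{e_i} q^{ℓ_i}` with `q = (1-p)/2`. -/
noncomputable def likelihood [Fintype V] (pc p : ℝ) : SimpleGraph V → List (V × V) → ℝ
  | _, [] => 1
  | G, s :: rest =>
      pc ^ deltaI G s.1 s.2 * p ^ extI G s.1 s.2 * ((1 - p) / 2) ^ lossI G s.1 s.2 *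
        likelihood pc p (mergeG G s.1 s.2) rest

/-- Rooted binary trees. -/
inductive BTree (V : Type u) : Type u
  | leaf : V → BTree V
  | node : BTree V → BTree V → BTree V

def BTree.leaves : BTree V → List V
  | .leaf v => [v]
  | .node l r => l.leaves ++ r.leaves

/-- A duplication forest: a list of rooted binary trees. -/
abbrev Forest (V : Type u) := List (BTree V)

def Forest.leaves (Γ : Forest V) : List V := Γ.flatMap BTree.leaves

/-- Replace the cherry `{u, v}` of a tree by the single leaf `u`. -/
inductive ReplaceCherry : BTree V → V → V → BTree V → Prop
  | base_left (u v : V) : ReplaceCherry (.node (.leaf u) (.leaf v)) u v (.leaf u)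
  | base_right (u v : V) : ReplaceCherry (.node (.leaf v) (.leaf u)) u v (.leaf u)
  | left {l l' r : BTree V} {u v : V} :
      ReplaceCherry l u v l' → ReplaceCherry (.node l r) u v (.node l' r)
  | right {l r r' : BTree V} {u v : V} :
      ReplaceCherry r u v r' → ReplaceCherry (.node l r) u v (.node l r')

/-- One backward step on a duplication forest: replace the cherry `{u,v}` in one tree. -/
inductive ForestStep : Forest V → V → V → Forest V → Prop
  | head {t t' : BTree V} {ts : Forest V} {u v : V} :
      ReplaceCherry t u v t' → ForestStep (t :: ts) u v (t' :: ts)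
  | tail {t : BTree V} {ts ts' : Forest V} {u v : V} :
      ForestStep ts u v ts' → ForestStep (t :: ts) u v (t :: ts')

/-- `FUnfold Γ steps Γ₀`: the (anchor, duplicate) list `steps`, processed backward in time,
is compatible with the duplication forest `Γ` and reduces it to `Γ₀`. -/
inductive FUnfold : Forest V → List (V × V) → Forest V → Prop
  | nil (Γ : Forest V) : FUnfold Γ [] Γ
  | cons {Γ Γ' Γ₀ : Forest V} {u v : V} {steps : List (V × V)} :
      ForestStep Γ u v Γ' → FUnfold Γ' steps Γ₀ → FUnfold Γ ((u, v) :: steps) Γ₀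

/-- A forest consisting only of isolated leaves (duplication forest of a seed graph). -/
def IsSeed (Γ : Forest V) : Prop := ∀ t ∈ Γ, ∃ v, t = BTree.leaf v

/-!
A merge `R_v^u` contracts the cherry `{u, v}` of the duplication forest, and `δ(v) = 1` exactly
when the two sides of that split are adjacent; adjacency across every other split, and between
any two trees, is unaffected. Hence `δ(θ)` is the number of adjacent splits of `Γ` in `G`, the
same for every compatible `θ`. A merge removes `e(v) + δ(v)` edges (the edges to common
neighbours coincide, the edge `uv` disappears), and at a seed forest the remaining edges are
exactly the adjacent pairs of trees, so `|E(G)| = #(adjacent pairs of trees of Γ) + e(θ) + δ(θ)`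
and `e(θ)` is invariant as well. The likelihoods of two compatible sequences therefore differ
only in the factor `((1 - p) / 2)^ℓ`.
-/

open Finset SimpleGraph

section Merge

variable {G : SimpleGraph V} {u v x y : V}

lemma mergeG_adj :
    (mergeG G u v).Adj x y ↔ x ≠ y ∧ x ≠ v ∧ y ≠ v ∧
      (G.Adj x y ∨ (x = u ∧ G.Adj v y) ∨ (y = u ∧ G.Adj v x)) := Iff.rfl

lemma mergeG_adj_of_ne (hxu : x ≠ u) (hxv : x ≠ v) (hyu : y ≠ u) (hyv : y ≠ v) :
    (mergeG G u v).Adj x y ↔ G.Adj x y := by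
  simp only [mergeG_adj, hxu, hyu, false_and, or_false]
  exact ⟨fun h => h.2.2.2, fun h => ⟨h.ne, hxv, hyv, h⟩⟩

variable [Fintype V]

lemma edgeFinset_mergeG (huv : u ≠ v) :
    (mergeG G u v).edgeFinset = (G.deleteIncidenceSet v).edgeFinset ∪
      (G.neighborFinset v \ insert u (G.neighborFinset u)).image (s(u, ·)) := by
  ext e
  induction e using Sym2.ind with
  | _ x y =>
    simp only [mem_union, mem_edgeFinset, mem_edgeSet, mergeG_adj, deleteIncidenceSet_adj,
      mem_image, mem_sdiff, mem_insert, mem_neighborFinset, Sym2.eq_iff]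
    grind [SimpleGraph.irrefl, SimpleGraph.adj_comm]

lemma degree_eq_extI_add_deltaI_add_card_sdiff :
    G.degree v = extI G u v + deltaI G u v +
      #(G.neighborFinset v \ insert u (G.neighborFinset u)) := by
  rw [← card_neighborFinset_eq_degree, ← card_sdiff_add_card_inter _ (insert u _), add_comm,
    inter_comm]
  congr 1
  by_cases huv : G.Adj u v
  · rw [insert_inter_of_mem ((G.mem_neighborFinset _ _).2 huv.symm),
      card_insert_of_notMem (by simp), extI, deltaI, if_pos huv]
  · rw [insert_inter_of_notMem (by simpa [G.adj_comm] using huv), extI, deltaI, if_neg huv,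
      add_zero]

lemma card_edgeFinset_mergeG (huv : u ≠ v) :
    #(mergeG G u v).edgeFinset + extI G u v + deltaI G u v = #G.edgeFinset := by
  have hnew : #((G.neighborFinset v \ insert u (G.neighborFinset u)).image (s(u, ·))) =
      #(G.neighborFinset v \ insert u (G.neighborFinset u)) :=
    card_image_of_injective _ fun _ _ => Sym2.congr_right.1
  have hdisj : Disjoint (G.deleteIncidenceSet v).edgeFinset
      ((G.neighborFinset v \ insert u (G.neighborFinset u)).image (s(u, ·))) := by
    simp only [disjoint_right, mem_image, mem_sdiff, mem_insert, mem_neighborFinset,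
      mem_edgeFinset]
    rintro _ ⟨y, ⟨-, hy⟩, rfl⟩ hadj
    exact hy (Or.inr ((deleteIncidenceSet_le G v) hadj))
  rw [edgeFinset_mergeG huv, card_union_of_disjoint hdisj, hnew,
    card_edgeFinset_deleteIncidenceSet]
  have := G.degree_le_card_edgeFinset v
  have := degree_eq_extI_add_deltaI_add_card_sdiff (G := G) (u := u) (v := v)
  omega

end Merge

section Leaves

variable {u v : V}

@[simp]
lemma Forest.leaves_nil : Forest.leaves ([] : Forest V) = [] := rfl

@[simp]
lemma Forest.leaves_cons (t : BTree V) (ts : Forest V) :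
    Forest.leaves (t :: ts) = t.leaves ++ Forest.leaves ts := List.flatMap_cons

lemma Forest.leaves_subset_of_mem {t : BTree V} {Γ : Forest V} (ht : t ∈ Γ) :
    t.leaves ⊆ Forest.leaves Γ :=
  fun _ hx => List.mem_flatMap.2 ⟨t, ht, hx⟩

lemma ReplaceCherry.leaves_perm {T T' : BTree V} (h : ReplaceCherry T u v T') :
    T.leaves.Perm (v :: T'.leaves) := by
  induction h with
  | base_left u v => exact List.Perm.swap v u []
  | base_right u v => exact List.Perm.refl _
  | left _ ih => exact ih.append_right _
  | @right l _ _ _ _ _ ih => exact (ih.append_left l.leaves).trans List.perm_middle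

lemma ReplaceCherry.mem_leaves {T T' : BTree V} (h : ReplaceCherry T u v T') :
    u ∈ T'.leaves := by
  induction h <;> simp_all [BTree.leaves]

lemma ReplaceCherry.pair_mem {T T' : BTree V} (h : ReplaceCherry T u v T') :
    u ∈ T.leaves ∧ v ∈ T.leaves :=
  ⟨h.leaves_perm.symm.subset (List.mem_cons_of_mem v h.mem_leaves),
    h.leaves_perm.symm.subset List.mem_cons_self⟩

lemma ReplaceCherry.ne {T T' : BTree V} (h : ReplaceCherry T u v T') (hnd : T.leaves.Nodup) :
    u ≠ v := by
  rintro rfl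
  exact (List.nodup_cons.1 (h.leaves_perm.nodup_iff.1 hnd)).1 h.mem_leaves

lemma ForestStep.leaves_perm {Γ Γ' : Forest V} (h : ForestStep Γ u v Γ') :
    (Forest.leaves Γ).Perm (v :: Forest.leaves Γ') := by
  induction h with
  | head hrc => exact hrc.leaves_perm.append_right _
  | @tail t _ _ _ _ _ ih => exact (ih.append_left t.leaves).trans List.perm_middle

lemma ForestStep.mem_leaves {Γ Γ' : Forest V} (h : ForestStep Γ u v Γ') :
    u ∈ Forest.leaves Γ' := by
  induction h with
  | head hrc => simp [hrc.mem_leaves]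
  | tail _ ih => simp [ih]

lemma ForestStep.pair_mem {Γ Γ' : Forest V} (h : ForestStep Γ u v Γ') :
    u ∈ Forest.leaves Γ ∧ v ∈ Forest.leaves Γ :=
  ⟨h.leaves_perm.symm.subset (List.mem_cons_of_mem v h.mem_leaves),
    h.leaves_perm.symm.subset List.mem_cons_self⟩

lemma ForestStep.nodup {Γ Γ' : Forest V} (h : ForestStep Γ u v Γ')
    (hnd : (Forest.leaves Γ).Nodup) : u ≠ v ∧ (Forest.leaves Γ').Nodup := by
  obtain ⟨hv, hnd'⟩ := List.nodup_cons.1 (h.leaves_perm.nodup_iff.1 hnd)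
  exact ⟨by rintro rfl; exact hv h.mem_leaves, hnd'⟩

end Leaves

def TreeAdj (G : SimpleGraph V) (S R : BTree V) : Prop :=
  ∃ a ∈ S.leaves, ∃ b ∈ R.leaves, G.Adj a b

section TreeAdj

variable {G G' : SimpleGraph V} {S R : BTree V} {u v : V}

lemma TreeAdj.symm (h : TreeAdj G S R) : TreeAdj G R S := by
  obtain ⟨a, ha, b, hb, hab⟩ := h
  exact ⟨b, hb, a, ha, hab.symm⟩

lemma treeAdj_comm : TreeAdj G S R ↔ TreeAdj G R S := ⟨TreeAdj.symm, TreeAdj.symm⟩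

@[simp]
lemma treeAdj_leaf_leaf {a b : V} : TreeAdj G (.leaf a) (.leaf b) ↔ G.Adj a b := by
  simp [TreeAdj, BTree.leaves]

lemma treeAdj_congr (h : ∀ a ∈ S.leaves, ∀ b ∈ R.leaves, (G'.Adj a b ↔ G.Adj a b)) :
    TreeAdj G' S R ↔ TreeAdj G S R := by
  unfold TreeAdj
  exact exists_congr fun a => and_congr_right fun ha =>
    exists_congr fun b => and_congr_right fun hb => h a ha b hb

lemma mergeG_adj_of_notMem {A B : List V} (huA : u ∉ A) (hvA : v ∉ A) (huB : u ∉ B)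
    (hvB : v ∉ B) : ∀ a ∈ A, ∀ b ∈ B, ((mergeG G u v).Adj a b ↔ G.Adj a b) :=
  fun _ ha _ hb => mergeG_adj_of_ne (ne_of_mem_of_not_mem ha huA)
    (ne_of_mem_of_not_mem ha hvA) (ne_of_mem_of_not_mem hb huB) (ne_of_mem_of_not_mem hb hvB)

lemma ReplaceCherry.treeAdj_mergeG {L L' : BTree V} (h : ReplaceCherry L u v L') (huv : u ≠ v)
    (huR : u ∉ R.leaves) (hvR : v ∉ R.leaves) :
    TreeAdj (mergeG G u v) L' R ↔ TreeAdj G L R := by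
  have hmem : ∀ x, x ∈ L.leaves ↔ x = v ∨ x ∈ L'.leaves := fun x => by
    simpa using h.leaves_perm.mem_iff (a := x)
  constructor
  · rintro ⟨a, ha, b, hb, hab⟩
    obtain ⟨-, -, -, hab | ⟨rfl, hvb⟩ | ⟨rfl, -⟩⟩ := mergeG_adj.1 hab
    · exact ⟨a, (hmem a).2 (.inr ha), b, hb, hab⟩
    · exact ⟨v, (hmem v).2 (.inl rfl), b, hb, hvb⟩
    · exact absurd hb huR
  · rintro ⟨a, ha, b, hb, hab⟩
    have hbu : b ≠ u := ne_of_mem_of_not_mem hb huR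
    have hbv : b ≠ v := ne_of_mem_of_not_mem hb hvR
    by_cases hav : a = v
    · subst hav
      exact ⟨u, h.mem_leaves, b, hb,
        mergeG_adj.2 ⟨hbu.symm, huv, hbv, .inr (.inl ⟨rfl, hab⟩)⟩⟩
    · exact ⟨a, ((hmem a).1 ha).resolve_left hav, b, hb,
        mergeG_adj.2 ⟨hab.ne, hav, hbv, .inl hab⟩⟩

end TreeAdj

noncomputable def BTree.adjSplits (G : SimpleGraph V) : BTree V → ℕ
  | .leaf _ => 0
  | .node l r => l.adjSplits G + r.adjSplits G + if TreeAdj G l r then 1 else 0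

noncomputable def Forest.adjSplits (G : SimpleGraph V) (Γ : Forest V) : ℕ :=
  (Γ.map (BTree.adjSplits G)).sum

section AdjSplits

variable {G G' : SimpleGraph V} {u v : V}

lemma BTree.adjSplits_congr {T : BTree V}
    (h : ∀ a ∈ T.leaves, ∀ b ∈ T.leaves, (G'.Adj a b ↔ G.Adj a b)) :
    T.adjSplits G' = T.adjSplits G := by
  induction T with
  | leaf => rfl
  | node l r ihl ihr =>
    simp only [BTree.leaves, List.mem_append] at h
    rw [BTree.adjSplits, BTree.adjSplits, ihl fun a ha b hb => h a (.inl ha) b (.inl hb),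
      ihr fun a ha b hb => h a (.inr ha) b (.inr hb),
      treeAdj_congr fun a ha b hb => h a (.inl ha) b (.inr hb)]

lemma ReplaceCherry.adjSplits_mergeG {T T' : BTree V} (h : ReplaceCherry T u v T')
    (hnd : T.leaves.Nodup) : T'.adjSplits (mergeG G u v) + deltaI G u v = T.adjSplits G := by
  induction h with
  | base_left u v => simp [BTree.adjSplits, deltaI]
  | base_right u v => simp [BTree.adjSplits, deltaI, G.adj_comm u v]
  | @left l l' r u v h ih =>
    rw [BTree.leaves] at hnd
    have huv := h.ne hnd.of_append_left
    have hdisj := List.disjoint_of_nodup_append hnd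
    have hu := hdisj h.pair_mem.1
    have hv := hdisj h.pair_mem.2
    rw [BTree.adjSplits, BTree.adjSplits, h.treeAdj_mergeG huv hu hv,
      BTree.adjSplits_congr (mergeG_adj_of_notMem hu hv hu hv), ← ih hnd.of_append_left]
    ring
  | @right l r r' u v h ih =>
    rw [BTree.leaves] at hnd
    have huv := h.ne hnd.of_append_right
    have hdisj := (List.disjoint_of_nodup_append hnd).symm
    have hu := hdisj h.pair_mem.1
    have hv := hdisj h.pair_mem.2
    rw [BTree.adjSplits, BTree.adjSplits, treeAdj_comm, h.treeAdj_mergeG huv hu hv,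
      treeAdj_comm, BTree.adjSplits_congr (mergeG_adj_of_notMem hu hv hu hv),
      ← ih hnd.of_append_right]
    ring

lemma Forest.adjSplits_cons (t : BTree V) (ts : Forest V) :
    Forest.adjSplits G (t :: ts) = t.adjSplits G + Forest.adjSplits G ts :=
  List.sum_cons

lemma Forest.adjSplits_congr {Γ : Forest V}
    (h : ∀ a ∈ Forest.leaves Γ, ∀ b ∈ Forest.leaves Γ, (G'.Adj a b ↔ G.Adj a b)) :
    Forest.adjSplits G' Γ = Forest.adjSplits G Γ := by
  refine congrArg List.sum (List.map_congr_left fun t ht => BTree.adjSplits_congr ?_)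
  have hsub := Forest.leaves_subset_of_mem ht
  exact fun a ha b hb => h a (hsub ha) b (hsub hb)

lemma ForestStep.adjSplits_mergeG {Γ Γ' : Forest V} (h : ForestStep Γ u v Γ')
    (hnd : (Forest.leaves Γ).Nodup) :
    Forest.adjSplits (mergeG G u v) Γ' + deltaI G u v = Forest.adjSplits G Γ := by
  induction h with
  | @head t t' ts u v hrc =>
    rw [Forest.leaves_cons] at hnd
    have hdisj := List.disjoint_of_nodup_append hnd
    have hu := hdisj hrc.pair_mem.1
    have hv := hdisj hrc.pair_mem.2
    rw [Forest.adjSplits_cons, Forest.adjSplits_cons,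
      Forest.adjSplits_congr (mergeG_adj_of_notMem hu hv hu hv),
      ← hrc.adjSplits_mergeG hnd.of_append_left]
    ring
  | @tail t ts ts' u v h ih =>
    rw [Forest.leaves_cons] at hnd
    have hdisj := (List.disjoint_of_nodup_append hnd).symm
    have hu := hdisj h.pair_mem.1
    have hv := hdisj h.pair_mem.2
    rw [Forest.adjSplits_cons, Forest.adjSplits_cons,
      BTree.adjSplits_congr (mergeG_adj_of_notMem hu hv hu hv), ← ih hnd.of_append_right]
    ring

end AdjSplits

noncomputable def Forest.adjPairs (G : SimpleGraph V) : Forest V → ℕ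
  | [] => 0
  | t :: ts => ts.countP (TreeAdj G t ·) + Forest.adjPairs G ts

section AdjPairs

variable {G G' : SimpleGraph V} {u v : V}

lemma countP_treeAdj_congr {t : BTree V} {ts : Forest V}
    (h : ∀ a ∈ t.leaves, ∀ b ∈ Forest.leaves ts, (G'.Adj a b ↔ G.Adj a b)) :
    ts.countP (TreeAdj G' t ·) = ts.countP (TreeAdj G t ·) := by
  refine List.countP_congr fun s hs => ?_
  have hsub := Forest.leaves_subset_of_mem hs
  simpa using treeAdj_congr fun a ha b hb => h a ha b (hsub hb)

lemma Forest.adjPairs_congr {Γ : Forest V}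
    (h : ∀ a ∈ Forest.leaves Γ, ∀ b ∈ Forest.leaves Γ, (G'.Adj a b ↔ G.Adj a b)) :
    Forest.adjPairs G' Γ = Forest.adjPairs G Γ := by
  induction Γ with
  | nil => rfl
  | cons t ts ih =>
    simp only [Forest.leaves_cons, List.mem_append] at h
    rw [Forest.adjPairs, Forest.adjPairs, ih fun a ha b hb => h a (.inr ha) b (.inr hb),
      countP_treeAdj_congr fun a ha b hb => h a (.inl ha) b (.inr hb)]

lemma ForestStep.countP_treeAdj_mergeG {ts ts' : Forest V} (h : ForestStep ts u v ts')
    (hnd : (Forest.leaves ts).Nodup) {t : BTree V} (hu : u ∉ t.leaves) (hv : v ∉ t.leaves) :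
    ts'.countP (TreeAdj (mergeG G u v) t ·) = ts.countP (TreeAdj G t ·) := by
  induction h with
  | @head s s' rest u v hrc =>
    rw [Forest.leaves_cons] at hnd
    have hdisj := List.disjoint_of_nodup_append hnd
    have huv := hrc.ne hnd.of_append_left
    have hadj : TreeAdj (mergeG G u v) t s' ↔ TreeAdj G t s := by
      rw [treeAdj_comm, hrc.treeAdj_mergeG huv hu hv, treeAdj_comm]
    simp only [List.countP_cons, hadj,
      countP_treeAdj_congr (mergeG_adj_of_notMem hu hv (hdisj hrc.pair_mem.1)
        (hdisj hrc.pair_mem.2))]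
  | @tail s rest rest' u v h ih =>
    rw [Forest.leaves_cons] at hnd
    have hdisj := (List.disjoint_of_nodup_append hnd).symm
    simp only [List.countP_cons, ih hnd.of_append_right hu hv,
      treeAdj_congr (mergeG_adj_of_notMem hu hv (hdisj h.pair_mem.1) (hdisj h.pair_mem.2))]

lemma ForestStep.adjPairs_mergeG {Γ Γ' : Forest V} (h : ForestStep Γ u v Γ')
    (hnd : (Forest.leaves Γ).Nodup) :
    Forest.adjPairs (mergeG G u v) Γ' = Forest.adjPairs G Γ := by
  induction h with
  | @head t t' ts u v hrc =>
    rw [Forest.leaves_cons] at hnd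
    have hdisj := List.disjoint_of_nodup_append hnd
    have huv := hrc.ne hnd.of_append_left
    have hu := hdisj hrc.pair_mem.1
    have hv := hdisj hrc.pair_mem.2
    rw [Forest.adjPairs, Forest.adjPairs,
      Forest.adjPairs_congr (mergeG_adj_of_notMem hu hv hu hv)]
    congr 1
    refine List.countP_congr fun s hs => ?_
    have hsub := Forest.leaves_subset_of_mem hs
    simpa using hrc.treeAdj_mergeG huv (fun hx => hu (hsub hx)) (fun hx => hv (hsub hx))
  | @tail t ts ts' u v h ih =>
    rw [Forest.leaves_cons] at hnd
    have hdisj := (List.disjoint_of_nodup_append hnd).symm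
    rw [Forest.adjPairs, Forest.adjPairs, ih hnd.of_append_right,
      h.countP_treeAdj_mergeG hnd.of_append_right (hdisj h.pair_mem.1) (hdisj h.pair_mem.2)]

end AdjPairs

section Seed

variable {G : SimpleGraph V}

@[simp]
lemma Forest.leaves_map_leaf (l : List V) : Forest.leaves (l.map BTree.leaf) = l := by
  induction l <;> simp_all [BTree.leaves]

lemma IsSeed.eq_map_leaf {Γ : Forest V} (h : IsSeed Γ) :
    Γ = (Forest.leaves Γ).map BTree.leaf := by
  induction Γ with
  | nil => rfl
  | cons t ts ih =>
    obtain ⟨a, rfl⟩ := h t List.mem_cons_self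
    simp [BTree.leaves, ← ih fun s hs => h s (List.mem_cons_of_mem _ hs)]

lemma IsSeed.adjSplits_eq_zero {Γ : Forest V} (h : IsSeed Γ) : Forest.adjSplits G Γ = 0 := by
  refine List.sum_eq_zero fun n hn => ?_
  obtain ⟨t, ht, rfl⟩ := List.mem_map.1 hn
  obtain ⟨a, rfl⟩ := h t ht
  rfl

variable [Fintype V]

lemma countP_adj_eq_degree {l : List V} (hl : l.Nodup) {a : V} (hN : ∀ b, G.Adj a b → b ∈ l) :
    l.countP (G.Adj a ·) = G.degree a := by
  rw [← card_neighborFinset_eq_degree, List.countP_eq_length_filter,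
    ← List.toFinset_card_of_nodup (hl.filter _), List.toFinset_filter]
  congr 1
  ext b
  simpa using fun hab => hN b hab

lemma card_edgeFinset_eq_adjPairs_map_leaf {l : List V} (hl : l.Nodup)
    (hG : G.support ⊆ {x | x ∈ l}) : #G.edgeFinset = Forest.adjPairs G (l.map .leaf) := by
  induction l generalizing G with
  | nil =>
    have : G = ⊥ := by
      ext x y
      simpa using fun h => hG ⟨y, h⟩
    subst this
    simp [Forest.adjPairs]
  | cons a l ih =>
    obtain ⟨ha, hl⟩ := List.nodup_cons.1 hl
    have hN : ∀ b, G.Adj a b → b ∈ l := fun b hab =>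
      (List.mem_cons.1 (hG ⟨a, hab.symm⟩)).resolve_left hab.ne'
    have hdel : Forest.adjPairs G (l.map .leaf) =
        Forest.adjPairs (G.deleteIncidenceSet a) (l.map .leaf) := by
      refine Forest.adjPairs_congr fun x hx y hy => ?_
      rw [Forest.leaves_map_leaf] at hx hy
      simp [deleteIncidenceSet_adj, ne_of_mem_of_not_mem hx ha, ne_of_mem_of_not_mem hy ha]
    have hsupp : (G.deleteIncidenceSet a).support ⊆ {x | x ∈ l} := fun x hx => by
      obtain ⟨hxG, hxa⟩ := support_deleteIncidenceSet_subset G a hx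
      exact (List.mem_cons.1 (hG hxG)).resolve_left hxa
    have hrow : (l.map .leaf).countP (TreeAdj G (.leaf a) ·) = G.degree a := by
      simpa [List.countP_map, Function.comp_def] using countP_adj_eq_degree hl hN
    rw [List.map_cons, Forest.adjPairs, hrow, hdel, ← ih hl hsupp]
    -- `convert` identifies the classical and the library `Fintype` instances on the edge set
    convert (Nat.add_sub_of_le (G.degree_le_card_edgeFinset a)).symm using 2
    convert G.card_edgeFinset_deleteIncidenceSet a

end Seed

section Unfold

variable {G : SimpleGraph V} {Γ Γ₀ : Forest V} {s : List (V × V)}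

lemma ForestStep.support_mergeG_subset {Γ' : Forest V} {u v : V} (h : ForestStep Γ u v Γ')
    (hG : G.support ⊆ {x | x ∈ Forest.leaves Γ}) :
    (mergeG G u v).support ⊆ {x | x ∈ Forest.leaves Γ'} := by
  rintro x ⟨y, hxy⟩
  obtain ⟨-, hxv, -, hadj | ⟨rfl, -⟩ | ⟨-, hvx⟩⟩ := mergeG_adj.1 hxy
  · simpa [hxv] using h.leaves_perm.subset (hG ⟨y, hadj⟩)
  · exact h.mem_leaves
  · simpa [hxv] using h.leaves_perm.subset (hG ⟨v, hvx.symm⟩)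

lemma graphAfter_cons (G : SimpleGraph V) (u v : V) (steps : List (V × V)) :
    graphAfter G ((u, v) :: steps) = graphAfter (mergeG G u v) steps := rfl

lemma FUnfold.nodup (h : FUnfold Γ s Γ₀) (hnd : (Forest.leaves Γ).Nodup) :
    (Forest.leaves Γ₀).Nodup := by
  induction h with
  | nil => exact hnd
  | cons hstep _ ih => exact ih (hstep.nodup hnd).2

lemma FUnfold.support_graphAfter_subset (h : FUnfold Γ s Γ₀)
    (hG : G.support ⊆ {x | x ∈ Forest.leaves Γ}) :
    (graphAfter G s).support ⊆ {x | x ∈ Forest.leaves Γ₀} := by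
  induction h generalizing G with
  | nil => exact hG
  | cons hstep _ ih => exact ih (hstep.support_mergeG_subset hG)

lemma FUnfold.deltaNum_add_adjSplits (h : FUnfold Γ s Γ₀) (hnd : (Forest.leaves Γ).Nodup) :
    deltaNum G s + Forest.adjSplits (graphAfter G s) Γ₀ = Forest.adjSplits G Γ := by
  induction h generalizing G with
  | nil => simp [deltaNum, graphAfter]
  | @cons _ _ _ u v steps hstep _ ih =>
    have hmerge := hstep.adjSplits_mergeG (G := G) hnd
    have hrest := ih (G := mergeG G u v) (hstep.nodup hnd).2
    simp only [deltaNum, graphAfter_cons]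
    omega

lemma FUnfold.adjPairs_graphAfter (h : FUnfold Γ s Γ₀) (hnd : (Forest.leaves Γ).Nodup) :
    Forest.adjPairs (graphAfter G s) Γ₀ = Forest.adjPairs G Γ := by
  induction h generalizing G with
  | nil => rfl
  | cons hstep _ ih => exact (ih (hstep.nodup hnd).2).trans (hstep.adjPairs_mergeG hnd)

variable [Fintype V]

lemma FUnfold.card_edgeFinset_graphAfter (h : FUnfold Γ s Γ₀) (hnd : (Forest.leaves Γ).Nodup) :
    #(graphAfter G s).edgeFinset + extNum G s + deltaNum G s = #G.edgeFinset := by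
  induction h generalizing G with
  | nil => rfl
  | @cons _ _ _ u v steps hstep _ ih =>
    obtain ⟨huv, hnd'⟩ := hstep.nodup hnd
    have hmerge := card_edgeFinset_mergeG (G := G) huv
    have hrest := ih (G := mergeG G u v) hnd'
    -- `rw [graphAfter_cons]` would keep the edge-set `Fintype` instance of the unfolded graph
    change #(graphAfter (mergeG G u v) steps).edgeFinset
      + (extI G u v + extNum (mergeG G u v) steps) + (deltaI G u v + deltaNum (mergeG G u v) steps)
      = _
    omega

end Unfold

section Invariants

variable {G : SimpleGraph V} {Γ Γ₀ : Forest V} {s : List (V × V)}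

theorem FUnfold.deltaNum_eq (h : FUnfold Γ s Γ₀) (hseed : IsSeed Γ₀)
    (hnd : (Forest.leaves Γ).Nodup) : deltaNum G s = Forest.adjSplits G Γ := by
  simpa [hseed.adjSplits_eq_zero] using h.deltaNum_add_adjSplits (G := G) hnd

theorem FUnfold.card_edgeFinset_eq [Fintype V] (h : FUnfold Γ s Γ₀) (hseed : IsSeed Γ₀)
    (hnd : (Forest.leaves Γ).Nodup) (hG : G.support ⊆ {x | x ∈ Forest.leaves Γ}) :
    #G.edgeFinset = Forest.adjPairs G Γ + extNum G s + deltaNum G s := by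
  have hfinal := card_edgeFinset_eq_adjPairs_map_leaf (h.nodup hnd)
    (h.support_graphAfter_subset hG)
  rw [← hseed.eq_map_leaf, h.adjPairs_graphAfter hnd] at hfinal
  rw [← h.card_edgeFinset_graphAfter (G := G) hnd, hfinal]

end Invariants

lemma likelihood_eq_pow_mul_pow_mul_pow [Fintype V] (pc p : ℝ) (G : SimpleGraph V) (s : List (V × V)) :
    likelihood pc p G s = pc ^ deltaNum G s * p ^ extNum G s * ((1 - p) / 2) ^ lossNum G s := by
  induction s generalizing G with
  | nil => simp [likelihood, deltaNum, extNum, lossNum]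
  | cons a rest ih =>
    rw [likelihood, deltaNum, extNum, lossNum, ih, pow_add, pow_add, pow_add]
    ring

theorem stmt10_general [Fintype V] (G : SimpleGraph V) (Γ : Forest V)
    (hnd : (Forest.leaves Γ).Nodup) (hall : ∀ x : V, x ∈ Forest.leaves Γ)
    (s₁ s₂ : List (V × V)) (Γ₁ Γ₂ : Forest V)
    (h₁ : FUnfold Γ s₁ Γ₁) (hseed₁ : IsSeed Γ₁)
    (h₂ : FUnfold Γ s₂ Γ₂) (hseed₂ : IsSeed Γ₂)
    (pc p : ℝ) (hpc0 : 0 < pc) (hp0 : 0 < p) (hp1 : p < 1) :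
    likelihood pc p G s₁ / likelihood pc p G s₂ =
        ((1 - p) / 2) ^ ((lossNum G s₁ : ℤ) - (lossNum G s₂ : ℤ)) ∧
      (likelihood pc p G s₂ ≤ likelihood pc p G s₁ ↔ lossNum G s₁ ≤ lossNum G s₂) := by
  have hG : G.support ⊆ {x | x ∈ Forest.leaves Γ} := fun x _ => hall x
  have hδ : deltaNum G s₁ = deltaNum G s₂ := by
    rw [h₁.deltaNum_eq hseed₁ hnd, h₂.deltaNum_eq hseed₂ hnd]
  have he : extNum G s₁ = extNum G s₂ := by
    have := h₁.card_edgeFinset_eq hseed₁ hnd hG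
    have := h₂.card_edgeFinset_eq hseed₂ hnd hG
    omega
  have hq0 : 0 < (1 - p) / 2 := by linarith
  have hq1 : (1 - p) / 2 < 1 := by linarith
  have hC : 0 < pc ^ deltaNum G s₂ * p ^ extNum G s₂ := by positivity
  rw [likelihood_eq_pow_mul_pow_mul_pow, likelihood_eq_pow_mul_pow_mul_pow, hδ, he]
  constructor
  · rw [mul_div_mul_left _ _ hC.ne', zpow_sub₀ hq0.ne', zpow_natCast, zpow_natCast]
  · rw [mul_le_mul_iff_right₀ hC, pow_le_pow_iff_right_of_lt_one₀ hq0 hq1]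

/-- for two compatible duplicate sequences,
`L(θ₁)/L(θ₂) = ((1-p)/2)^{ℓ(θ₁) - ℓ(θ₂)}`; in particular a compatible sequence has
larger likelihood iff it has smaller loss number (independently of `p_c`, `p`). -/
theorem stmt10 [Fintype V] (G : SimpleGraph V) (Γ : Forest V)
    (hnd : (Forest.leaves Γ).Nodup) (hall : ∀ x : V, x ∈ Forest.leaves Γ)
    (s₁ s₂ : List (V × V)) (Γ₁ Γ₂ : Forest V)
    (h₁ : FUnfold Γ s₁ Γ₁) (hseed₁ : IsSeed Γ₁)
    (h₂ : FUnfold Γ s₂ Γ₂) (hseed₂ : IsSeed Γ₂)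
    (pc p : ℝ) (hpc0 : 0 < pc) (hpc1 : pc < 1) (hp0 : 0 < p) (hp1 : p < 1) :
    likelihood pc p G s₁ / likelihood pc p G s₂ =
        ((1 - p) / 2) ^ ((lossNum G s₁ : ℤ) - (lossNum G s₂ : ℤ)) ∧
      (likelihood pc p G s₂ ≤ likelihood pc p G s₁ ↔ lossNum G s₁ ≤ lossNum G s₂) :=
  stmt10_general G Γ hnd hall s₁ s₂ Γ₁ Γ₂ h₁ hseed₁ h₂ hseed₂ pc p hpc0 hp0 hp1
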